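/- arXiv:1902.11093 — 6 statements merged into one kernel-verified Lean document; each statement's English description precedes it below -/
import Mathlib

section
/- Let L be an even lattice and s ∈ L primitive with (s,s) ≠ 0. If the reflection t(x) = x - (2(s,x)/(s,s))·s preserves L, then Div(s) = -(s,s) or Div(s) = -(s,s)/2 when (s,s) < 0 (equivalently |(s,s)| equals Div(s) or 2·Div(s)), where Div(s) is the positive generator of the ideal {(s,x) : x ∈ L} of ℤ. -/
/-!
Write `(s,s) = k·Div(s)` with `k < 0`. Applying the reflection to a vector `x` with
`(s,x) = Div(s)` shows `(2/k)·s ∈ L`. Since `s` is primitive, a lattice vector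
`(c/n)·s` forces `n ∣ c` (pass to `(gcd(n,c)/n)·s` by Bézout), so `k ∣ 2`,
i.e. `k = -1` or `k = -2`.
-/

/-- A vector `s` of a lattice `L` is primitive if it is not a multiple `m • w`,
`m > 1`, of another lattice vector `w`. -/
def IsPrimitiveIn {V : Type*} [AddCommGroup V] [Module ℚ V]
    (L : Submodule ℤ V) (s : V) : Prop :=
  s ∈ L ∧ ¬ ∃ (m : ℤ) (w : V), w ∈ L ∧ 1 < m ∧ s = (m : ℚ) • w

namespace IsPrimitiveIn

variable {V : Type*} [AddCommGroup V] [Module ℚ V] {L : Submodule ℤ V} {s : V}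

theorem ne_zero (hs : IsPrimitiveIn L s) : s ≠ 0 := by
  rintro rfl
  exact hs.2 ⟨2, 0, L.zero_mem, one_lt_two, by simp⟩

theorem eq_one_or_eq_neg_one (hs : IsPrimitiveIn L s) {m : ℤ} {w : V} (hw : w ∈ L)
    (hsw : s = (m : ℚ) • w) : m = 1 ∨ m = -1 := by
  rcases lt_trichotomy m 0 with hm | rfl | hm
  · refine Or.inr (by_contra fun hne => hs.2 ⟨-m, -w, L.neg_mem hw, by omega, ?_⟩)
    rw [hsw]
    push_cast
    module
  · exact absurd (by simpa using hsw) hs.ne_zero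
  · exact Or.inl (by_contra fun hne => hs.2 ⟨m, w, hw, by omega, hsw⟩)

theorem dvd_of_div_smul_mem (hs : IsPrimitiveIn L s) {n c : ℤ} (hn : n ≠ 0)
    (h : ((c : ℚ) / n) • s ∈ L) : n ∣ c := by
  set g : ℤ := (Int.gcd n c : ℤ) with hg_def
  have hnQ : (n : ℚ) ≠ 0 := by exact_mod_cast hn
  have hg_mem : ((g : ℚ) / n) • s ∈ L := by
    have hbezout : ((g : ℚ) / n) • s =
        (Int.gcdA n c : ℚ) • s + (Int.gcdB n c : ℚ) • ((c : ℚ) / n) • s := by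
      rw [smul_smul, ← add_smul, hg_def, Int.gcd_eq_gcd_ab]
      congr 1
      push_cast
      field_simp
    rw [hbezout, Int.cast_smul_eq_zsmul, Int.cast_smul_eq_zsmul]
    exact L.add_mem (L.smul_mem _ hs.1) (L.smul_mem _ h)
  have hg_ne : (g : ℚ) ≠ 0 := by
    have : 0 < g := by rw [hg_def]; exact_mod_cast Int.gcd_pos_of_ne_zero_left c hn
    exact_mod_cast this.ne'
  have hgn : g ∣ n := Int.gcd_dvd_left n c
  have hsw : s = ((n / g : ℤ) : ℚ) • ((g : ℚ) / n) • s := by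
    rw [smul_smul, Int.cast_div hgn hg_ne]
    field_simp
    simp
  have hn_dvd_g : n ∣ g := by
    rcases hs.eq_one_or_eq_neg_one hg_mem hsw with h1 | h1
    · rw [← Int.ediv_mul_cancel hgn, h1, one_mul]
    · rw [← Int.ediv_mul_cancel hgn, h1, neg_one_mul, Int.neg_dvd]
  exact hn_dvd_g.trans (Int.gcd_dvd_right n c)

end IsPrimitiveIn

theorem reflection_divisor_general
    {V : Type*} [AddCommGroup V] [Module ℚ V]
    (B : V →ₗ[ℚ] V →ₗ[ℚ] ℚ)
    (L : Submodule ℤ V)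
    (s : V) (hs : IsPrimitiveIn L s) (hneg : B s s < 0)
    -- `d` is the positive generator of the ideal `{(s,x) : x ∈ L} ⊆ ℤ`:
    (d : ℤ) (hd0 : 0 < d)
    (hgen : ∃ x ∈ L, B s x = (d : ℚ))
    (hdvd : ∀ x ∈ L, ∃ k : ℤ, B s x = (k : ℚ) * (d : ℚ))
    -- the reflection preserves `L`:
    (hrefl : ∀ x ∈ L, x - (2 * B s x / B s s) • s ∈ L) :
    (d : ℚ) = -(B s s) ∨ (d : ℚ) = -(B s s) / 2 := by
  obtain ⟨x, hxL, hx⟩ := hgen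
  obtain ⟨k, hk⟩ := hdvd s hs.1
  have hdQ : (0 : ℚ) < d := by exact_mod_cast hd0
  have hk_neg : k < 0 := by
    have : (k : ℚ) < 0 := neg_of_mul_neg_left (hk ▸ hneg) hdQ.le
    exact_mod_cast this
  have hmem : (((2 : ℤ) : ℚ) / k) • s ∈ L := by
    convert L.sub_mem hxL (hrefl x hxL) using 1
    rw [sub_sub_cancel, hx, hk]
    congr 1
    field_simp
    push_cast
    ring
  have hk_dvd : -k ∣ 2 := (Int.neg_dvd).2 (hs.dvd_of_div_smul_mem hk_neg.ne hmem)
  have hk_le : -k ≤ 2 := Int.le_of_dvd two_pos hk_dvd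
  obtain rfl | rfl : k = -1 ∨ k = -2 := by omega
  · left
    rw [hk]
    push_cast
    ring
  · right
    rw [hk]
    push_cast
    ring

/-- If the reflection in a primitive vector `s` with `(s,s) < 0` preserves the even
lattice `L`, then the divisor `d` of `s` (the positive generator of the ideal
`{(s,x) : x ∈ L}` of `ℤ`) equals `-(s,s)` or `-(s,s)/2`. -/
theorem reflection_divisor
    {V : Type*} [AddCommGroup V] [Module ℚ V]
    (B : V →ₗ[ℚ] V →ₗ[ℚ] ℚ)
    (L : Submodule ℤ V)
    (hsymm : ∀ x y : V, B x y = B y x)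
    (hint : ∀ x ∈ L, ∀ y ∈ L, ∃ n : ℤ, B x y = (n : ℚ))
    (heven : ∀ x ∈ L, ∃ n : ℤ, B x x = 2 * (n : ℚ))
    (s : V) (hs : IsPrimitiveIn L s) (hneg : B s s < 0)
    -- `d` is the positive generator of the ideal `{(s,x) : x ∈ L} ⊆ ℤ`:
    (d : ℤ) (hd0 : 0 < d)
    (hgen : ∃ x ∈ L, B s x = (d : ℚ))
    (hdvd : ∀ x ∈ L, ∃ k : ℤ, B s x = (k : ℚ) * (d : ℚ))
    -- the reflection preserves `L`:
    (hrefl : ∀ x ∈ L, x - (2 * B s x / B s s) • s ∈ L) :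
    (d : ℚ) = -(B s s) ∨ (d : ℚ) = -(B s s) / 2 :=
  reflection_divisor_general B L s hs hneg d hd0 hgen hdvd hrefl
end

section
/- Let L be an even unimodular lattice and M ⊆ L a primitive nondegenerate sublattice with orthogonal complement K = M⊥ ∩ L. Then M ⊕ K ⊆ L ⊆ M* ⊕ K*, and the finite abelian groups M*/M and K*/K are isomorphic via an isomorphism γ satisfying q_K ∘ γ = -q_M, where q denotes the discriminant quadratic form with values in ℚ/2ℤ. Moreover L = {(x,y) ∈ M* ⊕ K* : ȳ = γ(x̄)}, where x̄, ȳ denote the classes in M*/M and K*/K. -/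
/-- The dual lattice `L* = {x ∈ L ⊗ ℚ : (x,y) ∈ ℤ for all y ∈ L}`, realised inside
the ambient rational vector space. -/
def dualLat {V : Type*} [AddCommGroup V] [Module ℚ V]
    (B : V →ₗ[ℚ] V →ₗ[ℚ] ℚ) (L : Submodule ℤ V) : Submodule ℤ V where
  carrier := {x | x ∈ Submodule.span ℚ (L : Set V) ∧ ∀ y ∈ L, ∃ n : ℤ, B x y = (n : ℚ)}
  zero_mem' := ⟨Submodule.zero_mem _, fun y _ => ⟨0, by simp⟩⟩
  add_mem' := by
    rintro a b ⟨ha1, ha2⟩ ⟨hb1, hb2⟩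
    refine ⟨Submodule.add_mem _ ha1 hb1, fun y hy => ?_⟩
    obtain ⟨m, hm⟩ := ha2 y hy
    obtain ⟨k, hk⟩ := hb2 y hy
    refine ⟨m + k, ?_⟩
    rw [map_add, LinearMap.add_apply, hm, hk]
    push_cast; ring
  smul_mem' := by
    rintro n x ⟨hx1, hx2⟩
    have h : (n : ℤ) • x = ((n : ℚ)) • x := (Int.cast_smul_eq_zsmul ℚ n x).symm
    constructor
    · rw [h]; exact Submodule.smul_mem _ _ hx1
    · intro y hy
      obtain ⟨m, hm⟩ := hx2 y hy
      refine ⟨n * m, ?_⟩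
      rw [h, map_smul, LinearMap.smul_apply, hm, smul_eq_mul]
      push_cast; ring

/-!
Since `B` is nondegenerate on `ℚM`, the space splits orthogonally as `ℚM ⊕ ℚK`, and the two
projections send `L` into `M*` and `K*`. The induced maps `L → M*/M` and `L → K*/K` are both
surjective: a primitive sublattice is a direct summand of `L`, so every integral functional on
it extends to an integral functional on `L`, which by unimodularity is `B l` for some `l ∈ L`.
By primitivity both maps have kernel `M ⊕ K`, so together they induce `γ`; and if
`x + y ∈ L` with `x ⊥ y`, evenness of `B (x + y) (x + y) = B x x + B y y` gives
`q_K (γ x̄) = -q_M (x̄)`.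
-/

open Submodule

theorem isTorsionFree_quotient_of_primitive {R A : Type*} [CommRing R] [IsDomain R]
    [AddCommGroup A] [Module R A] {L N : Submodule R A}
    (hN : ∀ x ∈ L, ∀ r : R, r ≠ 0 → r • x ∈ N → x ∈ N) :
    Module.IsTorsionFree R (L ⧸ N.comap L.subtype) := by
  refine .of_smul_eq_zero fun r q hq => or_iff_not_imp_left.2 fun hn => ?_
  obtain ⟨l, rfl⟩ := Submodule.Quotient.mk_surjective _ q
  rw [← Submodule.Quotient.mk_smul, Submodule.Quotient.mk_eq_zero] at hq
  rw [Submodule.Quotient.mk_eq_zero]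
  exact hN l l.2 r hn hq

theorem Submodule.exists_retraction_of_isTorsionFree_quotient {R A : Type*} [CommRing R]
    [IsDomain R] [IsPrincipalIdealRing R] [AddCommGroup A] [Module R A] [Module.Finite R A]
    (P : Submodule R A) [Module.IsTorsionFree R (A ⧸ P)] :
    ∃ r : A →ₗ[R] A, (∀ a, r a ∈ P) ∧ ∀ a ∈ P, r a = a := by
  obtain ⟨s, hs⟩ := Module.projective_lifting_property P.mkQ LinearMap.id P.mkQ_surjective
  refine ⟨LinearMap.id - s ∘ₗ P.mkQ, fun a => ?_, fun a ha => ?_⟩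
  · rw [← Submodule.Quotient.mk_eq_zero, ← mkQ_apply]
    simpa [sub_eq_zero] using congr($hs (P.mkQ a)).symm
  · simp [(Submodule.Quotient.mk_eq_zero P).2 ha]

section

variable {V : Type*} [AddCommGroup V] [Module ℚ V]

theorem exists_zsmul_mem_of_mem_span (L : Submodule ℤ V) {v : V}
    (hv : v ∈ span ℚ (L : Set V)) : ∃ n : ℤ, n ≠ 0 ∧ n • v ∈ L := by
  obtain ⟨y, hy, z, rfl⟩ := (IsLocalization.mem_span_iff (nonZeroDivisors ℤ) (S := ℚ)).1 hv
  refine ⟨z, nonZeroDivisors.coe_ne_zero z, ?_⟩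
  rw [span_eq] at hy
  rwa [← Int.cast_smul_eq_zsmul ℚ, smul_smul, ← eq_intCast (algebraMap ℤ ℚ),
    IsLocalization.mul_mk'_eq_mk'_of_mul, mul_one, IsLocalization.mk'_self, one_smul]

theorem mem_of_mem_span_of_primitive {L N : Submodule ℤ V}
    (hN : ∀ x ∈ L, ∀ n : ℤ, n ≠ 0 → n • x ∈ N → x ∈ N) {x : V} (hxL : x ∈ L)
    (hx : x ∈ span ℚ (N : Set V)) : x ∈ N := by
  obtain ⟨n, hn, hnx⟩ := exists_zsmul_mem_of_mem_span N hx
  exact hN x hxL n hn hnx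

instance Module.IsTorsionFree.int_of_rat : Module.IsTorsionFree ℤ V :=
  .comap (Int.cast : ℤ → ℚ)
    (fun _ hn => isRegular_iff_ne_zero.2 (Int.cast_ne_zero.2 (isRegular_iff_ne_zero.1 hn)))
    (Int.cast_smul_eq_zsmul ℚ)

theorem exists_linearMap_extension_of_span_eq_top {L : Submodule ℤ V} (hfg : L.FG)
    (hspan : span ℚ (L : Set V) = ⊤) (g : L →ₗ[ℤ] ℚ) :
    ∃ G : V →ₗ[ℚ] ℚ, ∀ l : L, G l = g l := by
  have : Module.Finite ℤ L := Module.Finite.iff_fg.mpr hfg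
  let b := Module.Free.chooseBasis ℤ L
  have hli : LinearIndependent ℚ (L.subtype ∘ b) :=
    (LinearIndependent.iff_fractionRing ℤ ℚ).1
      (b.linearIndependent.map' L.subtype (ker_subtype L))
  have hsp : ⊤ ≤ span ℚ (Set.range (L.subtype ∘ b)) := by
    have hL : span ℤ (L.subtype '' Set.range b) = L := by
      rw [← map_span, b.span_eq, Submodule.map_top, range_subtype]
    rw [← hspan, Set.range_comp]
    exact span_le.2 fun x hx => span_subset_span ℤ ℚ _ (hL.symm ▸ hx)
  let bV := Module.Basis.mk hli hsp
  refine ⟨bV.constr ℚ (g ∘ b), fun l => ?_⟩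
  have : (bV.constr ℚ (g ∘ b)).restrictScalars ℤ ∘ₗ L.subtype = g :=
    b.ext fun i => (congrArg _ (Module.Basis.mk_apply hli hsp i).symm).trans
      (bV.constr_basis ℚ _ i)
  exact congr($this l)

variable {B : V →ₗ[ℚ] V →ₗ[ℚ] ℚ}

theorem apply_eq_zero_of_mem_span_of_mem_span {S T : Set V}
    (h : ∀ x ∈ S, ∀ y ∈ T, B x y = 0) {x y : V} (hx : x ∈ span ℚ S) (hy : y ∈ span ℚ T) :
    B x y = 0 := by
  have hT : ∀ x ∈ S, span ℚ T ≤ LinearMap.ker (B x) := fun x hx => span_le.2 (h x hx)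
  have hS : span ℚ S ≤ LinearMap.ker (B.flip y) := span_le.2 fun x hx => hT x hx hy
  exact hS hx

theorem mem_span_of_forall_apply_eq_zero {L M K : Submodule ℤ V}
    (hspan : span ℚ (L : Set V) = ⊤) (hK : ∀ x : V, x ∈ K ↔ (x ∈ L ∧ ∀ y ∈ M, B x y = 0))
    {x : V} (hx : ∀ y ∈ M, B x y = 0) : x ∈ span ℚ (K : Set V) := by
  obtain ⟨n, hn, hnxL⟩ := exists_zsmul_mem_of_mem_span L (hspan ▸ mem_top : x ∈ _)
  have hnxK : n • x ∈ K := (hK _).2 ⟨hnxL, fun y hy => by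
    rw [← Int.cast_smul_eq_zsmul ℚ, map_smul, LinearMap.smul_apply, hx y hy, smul_zero]⟩
  have hx' : x = (n : ℚ)⁻¹ • n • x := by
    rw [← Int.cast_smul_eq_zsmul ℚ, smul_smul, inv_mul_cancel₀ (Int.cast_ne_zero.2 hn), one_smul]
  rw [hx']
  exact smul_mem _ _ (subset_span hnxK)

def IsOrthogonalProjection (B : V →ₗ[ℚ] V →ₗ[ℚ] ℚ) (N : Submodule ℤ V) (p : V →ₗ[ℚ] V) :
    Prop :=
  (∀ v, p v ∈ span ℚ (N : Set V)) ∧ ∀ v, ∀ y ∈ N, B (v - p v) y = 0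

namespace IsOrthogonalProjection

variable {N : Submodule ℤ V} {p : V →ₗ[ℚ] V}

theorem apply_eq (hp : IsOrthogonalProjection B N p)
    (hN : ∀ x ∈ span ℚ (N : Set V), (∀ y ∈ N, B x y = 0) → x = 0) {v w : V}
    (hw : w ∈ span ℚ (N : Set V)) (h : ∀ y ∈ N, B v y = B w y) : p v = w := by
  refine sub_eq_zero.1 (hN _ (sub_mem (hp.1 v) hw) fun y hy => ?_)
  have := hp.2 v y hy
  simp only [map_sub, LinearMap.sub_apply] at this ⊢
  linarith [h y hy]

theorem apply_mem_dualLat (hp : IsOrthogonalProjection B N p) {L : Submodule ℤ V}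
    (hint : ∀ x ∈ L, ∀ y ∈ L, ∃ n : ℤ, B x y = n) (hNL : N ≤ L) {l : V} (hl : l ∈ L) :
    p l ∈ dualLat B N := by
  refine ⟨hp.1 l, fun y hy => ?_⟩
  obtain ⟨n, hn⟩ := hint l hl y (hNL hy)
  have := hp.2 l y hy
  rw [map_sub, LinearMap.sub_apply, sub_eq_zero] at this
  exact ⟨n, this ▸ hn⟩

theorem id_sub {M K : Submodule ℤ V} (hp : IsOrthogonalProjection B M p)
    (hMK : ∀ x ∈ M, ∀ y ∈ K, B x y = 0)
    (hKspan : ∀ x, (∀ y ∈ M, B x y = 0) → x ∈ span ℚ (K : Set V)) :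
    IsOrthogonalProjection B K (LinearMap.id - p) := by
  refine ⟨fun v => hKspan _ (hp.2 v), fun v y hy => ?_⟩
  rw [LinearMap.sub_apply, LinearMap.id_apply, sub_sub_cancel]
  exact apply_eq_zero_of_mem_span_of_mem_span hMK (hp.1 v) (subset_span hy)

theorem nondegenerate_of_id_sub {M K : Submodule ℤ V}
    (hnd : ∀ x : V, (∀ y : V, B x y = 0) → x = 0) (hsymm : ∀ x y : V, B x y = B y x)
    (hp : IsOrthogonalProjection B M p)
    (hq : IsOrthogonalProjection B K (LinearMap.id - p)) (hMK : ∀ x ∈ M, ∀ y ∈ K, B x y = 0) :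
    ∀ x ∈ span ℚ (K : Set V), (∀ y ∈ K, B x y = 0) → x = 0 := by
  intro x hx hxK
  refine hnd x fun v => ?_
  have h1 : B x (p v) = 0 := by
    rw [hsymm]; exact apply_eq_zero_of_mem_span_of_mem_span hMK (hp.1 v) hx
  have h2 : B x (v - p v) = 0 :=
    apply_eq_zero_of_mem_span_of_mem_span (S := {x}) (fun _ h y hy => h ▸ hxK y hy)
      (mem_span_singleton_self x) (by simpa using hq.1 v)
  rw [← add_sub_cancel (p v) v, map_add, h1, h2, add_zero]

end IsOrthogonalProjection

theorem exists_isOrthogonalProjection [FiniteDimensional ℚ V] (hsymm : ∀ x y : V, B x y = B y x)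
    {N : Submodule ℤ V} (hN : ∀ x ∈ span ℚ (N : Set V), (∀ y ∈ N, B x y = 0) → x = 0) :
    ∃ p, IsOrthogonalProjection B N p := by
  set W := span ℚ (N : Set V)
  have hWnd : (LinearMap.BilinForm.restrict B W).Nondegenerate :=
    ⟨fun x hx => Subtype.ext (hN x x.2 fun y hy => hx ⟨y, subset_span hy⟩),
      fun x hx => Subtype.ext (hN x x.2 fun y hy => hsymm x y ▸ hx ⟨y, subset_span hy⟩)⟩
  have hcompl := (LinearMap.BilinForm.restrict_nondegenerate_iff_isCompl_orthogonal
    (fun x y h => (hsymm x y).symm.trans h)).1 hWnd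
  refine ⟨W.projection _ hcompl, fun v => projection_apply_mem hcompl v, fun v y hy => ?_⟩
  rw [hsymm]
  exact sub_projection_mem hcompl v y (subset_span hy)

theorem exists_mem_forall_apply_eq_of_unimodular [FiniteDimensional ℚ V]
    (hnd : ∀ x : V, (∀ y : V, B x y = 0) → x = 0)
    {L : Submodule ℤ V} (hspan : span ℚ (L : Set V) = ⊤) (hfg : L.FG)
    (hunimod : dualLat B L = L) (g : L →ₗ[ℤ] ℚ) (hg : ∀ l, ∃ n : ℤ, g l = n) :
    ∃ v ∈ L, ∀ l : L, B v l = g l := by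
  obtain ⟨G, hG⟩ := exists_linearMap_extension_of_span_eq_top hfg hspan g
  set v := (LinearMap.BilinForm.toDual B (.ofSeparatingLeft hnd)).symm G
  have hv : ∀ x, B v x = G x := LinearMap.BilinForm.apply_toDual_symm_apply G
  refine ⟨v, hunimod ▸ ⟨hspan ▸ mem_top, fun y hy => ?_⟩, fun l => (hv l).trans (hG l)⟩
  obtain ⟨n, hn⟩ := hg ⟨y, hy⟩
  exact ⟨n, (hv y).trans ((hG ⟨y, hy⟩).trans hn)⟩

theorem exists_mem_forall_apply_eq_of_mem_dualLat [FiniteDimensional ℚ V]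
    (hnd : ∀ x : V, (∀ y : V, B x y = 0) → x = 0)
    {L N : Submodule ℤ V} (hspan : span ℚ (L : Set V) = ⊤) (hfg : L.FG)
    (hunimod : dualLat B L = L) (hNL : N ≤ L)
    (hN : ∀ x ∈ L, ∀ n : ℤ, n ≠ 0 → n • x ∈ N → x ∈ N) {a : V} (ha : a ∈ dualLat B N) :
    ∃ l ∈ L, ∀ y ∈ N, B l y = B a y := by
  have : Module.Finite ℤ L := Module.Finite.iff_fg.mpr hfg
  have := isTorsionFree_quotient_of_primitive hN
  obtain ⟨r, hrN, hr⟩ := (N.comap L.subtype).exists_retraction_of_isTorsionFree_quotient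
  obtain ⟨v, hvL, hv⟩ := exists_mem_forall_apply_eq_of_unimodular hnd hspan hfg hunimod
    ((B a).restrictScalars ℤ ∘ₗ L.subtype ∘ₗ r) (fun l => ha.2 _ (hrN l))
  refine ⟨v, hvL, fun y hy => ?_⟩
  simpa [hr ⟨y, hNL hy⟩ hy] using hv ⟨y, hNL hy⟩

theorem mem_of_zsmul_mem_of_orthogonal {L M K : Submodule ℤ V}
    (hK : ∀ x : V, x ∈ K ↔ (x ∈ L ∧ ∀ y ∈ M, B x y = 0)) :
    ∀ x ∈ L, ∀ n : ℤ, n ≠ 0 → n • x ∈ K → x ∈ K := by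
  intro x hx n hn hnx
  refine (hK x).2 ⟨hx, fun y hy => ?_⟩
  have := ((hK _).1 hnx).2 y hy
  rw [← Int.cast_smul_eq_zsmul ℚ, map_smul, LinearMap.smul_apply, smul_eq_mul] at this
  exact (mul_eq_zero.1 this).resolve_left (Int.cast_ne_zero.2 hn)

theorem IsOrthogonalProjection.apply_mem_iff_sub_mem {L M K : Submodule ℤ V} {p : V →ₗ[ℚ] V}
    (hp : IsOrthogonalProjection B M p) (hML : M ≤ L)
    (hMprim : ∀ x ∈ L, ∀ n : ℤ, n ≠ 0 → n • x ∈ M → x ∈ M)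
    (hK : ∀ x : V, x ∈ K ↔ (x ∈ L ∧ ∀ y ∈ M, B x y = 0)) {l : V} (hl : l ∈ L) :
    p l ∈ M ↔ l - p l ∈ K := by
  refine ⟨fun h => (hK _).2 ⟨sub_mem hl (hML h), hp.2 l⟩, fun h => ?_⟩
  refine mem_of_mem_span_of_primitive hMprim ?_ (hp.1 l)
  simpa using sub_mem hl ((hK _).1 h).1

abbrev DiscriminantGroup (B : V →ₗ[ℚ] V →ₗ[ℚ] ℚ) (N : Submodule ℤ V) : Type _ :=
  dualLat B N ⧸ N.comap (dualLat B N).subtype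

section DiscriminantGroup

variable {L N : Submodule ℤ V} {p : V →ₗ[ℚ] V}

def toDiscriminantGroup (hp : ∀ l ∈ L, p l ∈ dualLat B N) : L →ₗ[ℤ] DiscriminantGroup B N :=
  (N.comap (dualLat B N).subtype).mkQ ∘ₗ
    (p.restrictScalars ℤ ∘ₗ L.subtype).codRestrict _ fun l => hp l l.2

theorem toDiscriminantGroup_eq_mk_iff (hp : ∀ l ∈ L, p l ∈ dualLat B N) (l : L)
    (x : dualLat B N) :
    toDiscriminantGroup hp l = Submodule.Quotient.mk x ↔ p l - x ∈ N :=
  Submodule.Quotient.eq _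

theorem toDiscriminantGroup_eq_zero_iff (hp : ∀ l ∈ L, p l ∈ dualLat B N) (l : L) :
    toDiscriminantGroup hp l = 0 ↔ p l ∈ N := by
  rw [← Submodule.Quotient.mk_zero, toDiscriminantGroup_eq_mk_iff, ZeroMemClass.coe_zero,
    sub_zero]

theorem toDiscriminantGroup_surjective [FiniteDimensional ℚ V]
    (hnd : ∀ x : V, (∀ y : V, B x y = 0) → x = 0)
    (hspan : span ℚ (L : Set V) = ⊤) (hfg : L.FG) (hunimod : dualLat B L = L) (hNL : N ≤ L)
    (hN : ∀ x ∈ L, ∀ n : ℤ, n ≠ 0 → n • x ∈ N → x ∈ N)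
    (hNnd : ∀ x ∈ span ℚ (N : Set V), (∀ y ∈ N, B x y = 0) → x = 0)
    (hp : IsOrthogonalProjection B N p) (hpL : ∀ l ∈ L, p l ∈ dualLat B N) :
    Function.Surjective (toDiscriminantGroup hpL) := by
  intro q
  obtain ⟨a, rfl⟩ := Submodule.Quotient.mk_surjective _ q
  obtain ⟨l, hl, hla⟩ :=
    exists_mem_forall_apply_eq_of_mem_dualLat hnd hspan hfg hunimod hNL hN a.2
  refine ⟨⟨l, hl⟩, (toDiscriminantGroup_eq_mk_iff hpL _ a).2 ?_⟩
  rw [hp.apply_eq hNnd a.2.1 hla, sub_self]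
  exact zero_mem N

end DiscriminantGroup

theorem LinearMap.exists_linearEquiv_comp_eq_of_ker_eq {R A P Q : Type*} [Ring R]
    [AddCommGroup A] [Module R A] [AddCommGroup P] [Module R P] [AddCommGroup Q] [Module R Q]
    {ψ : A →ₗ[R] P} {φ : A →ₗ[R] Q} (hψ : Function.Surjective ψ)
    (hφ : Function.Surjective φ) (h : ker ψ = ker φ) :
    ∃ γ : P ≃ₗ[R] Q, ∀ a, γ (ψ a) = φ a :=
  ⟨((ψ.quotKerEquivOfSurjective hψ).symm.trans (quotEquivOfEq _ _ h)).trans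
    (φ.quotKerEquivOfSurjective hφ), fun a => by simp⟩

theorem add_mem_iff_of_comp_eq {L M K : Submodule ℤ V} {p : V →ₗ[ℚ] V}
    (hp : IsOrthogonalProjection B M p)
    (hMnd : ∀ x ∈ span ℚ (M : Set V), (∀ y ∈ M, B x y = 0) → x = 0)
    (hKM : ∀ x ∈ K, ∀ y ∈ M, B x y = 0) (hML : M ≤ L) (hKL : K ≤ L)
    (hpM : ∀ l ∈ L, p l ∈ dualLat B M)
    (hpK : ∀ l ∈ L, (LinearMap.id - p : V →ₗ[ℚ] V) l ∈ dualLat B K)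
    (γ : DiscriminantGroup B M ≃ₗ[ℤ] DiscriminantGroup B K)
    (hγ : ∀ l, γ (toDiscriminantGroup hpM l) = toDiscriminantGroup hpK l)
    (hsurj : Function.Surjective (toDiscriminantGroup hpM)) (x : dualLat B M)
    (y : dualLat B K) :
    (x : V) + y ∈ L ↔ γ (Submodule.Quotient.mk x) = Submodule.Quotient.mk y := by
  constructor
  · intro h
    have hpxy : p (x + y) = x := hp.apply_eq hMnd x.2.1 fun m hm => by
      rw [map_add, LinearMap.add_apply,
        apply_eq_zero_of_mem_span_of_mem_span hKM y.2.1 (subset_span hm), add_zero]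
    have hM : toDiscriminantGroup hpM ⟨_, h⟩ = Submodule.Quotient.mk x :=
      (toDiscriminantGroup_eq_mk_iff _ _ _).2 (by simp [hpxy])
    rw [← hM, hγ, toDiscriminantGroup_eq_mk_iff]
    simp [hpxy]
  · intro h
    obtain ⟨l, hl⟩ := hsurj (Submodule.Quotient.mk x)
    have hlM : p l - x ∈ M := (toDiscriminantGroup_eq_mk_iff _ _ _).1 hl
    have hlK : (LinearMap.id - p : V →ₗ[ℚ] V) l - y ∈ K :=
      (toDiscriminantGroup_eq_mk_iff _ _ _).1 (by rw [← hγ, hl, h])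
    have hxy : (x : V) + y = l - (p l - x) - ((LinearMap.id - p : V →ₗ[ℚ] V) l - y) := by
      simp only [LinearMap.sub_apply, LinearMap.id_apply]
      abel
    rw [hxy]
    exact sub_mem (sub_mem l.2 (hML hlM)) (hKL hlK)

end

/-- Gluing lemma: for a primitive nondegenerate sublattice `M` of an even unimodular
lattice `L` with orthogonal complement `K = M⊥ ∩ L`, one has
`M ⊕ K ⊆ L ⊆ M* ⊕ K*`, and there is an isomorphism `γ : M*/M ≅ K*/K` with
`q_K ∘ γ = -q_M` (values in `ℚ/2ℤ`), such that
`L = {(x,y) ∈ M* ⊕ K* : ȳ = γ(x̄)}`. -/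
theorem gluing_lemma
    {V : Type*} [AddCommGroup V] [Module ℚ V] [FiniteDimensional ℚ V]
    (B : V →ₗ[ℚ] V →ₗ[ℚ] ℚ)
    (hsymm : ∀ x y : V, B x y = B y x)
    (hnd : ∀ x : V, (∀ y : V, B x y = 0) → x = 0)
    (L M K : Submodule ℤ V)
    (hspan : Submodule.span ℚ (L : Set V) = ⊤)
    (hfg : L.FG)
    (hint : ∀ x ∈ L, ∀ y ∈ L, ∃ n : ℤ, B x y = (n : ℚ))
    (heven : ∀ x ∈ L, ∃ n : ℤ, B x x = 2 * (n : ℚ))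
    -- `L` is unimodular:
    (hunimod : dualLat B L = L)
    -- `M` is a primitive nondegenerate sublattice of `L`:
    (hML : M ≤ L)
    (hMprim : ∀ x ∈ L, ∀ n : ℤ, n ≠ 0 → n • x ∈ M → x ∈ M)
    (hMnd : ∀ x ∈ Submodule.span ℚ (M : Set V), (∀ y ∈ M, B x y = 0) → x = 0)
    -- `K = M⊥ ∩ L`:
    (hK : ∀ x : V, x ∈ K ↔ (x ∈ L ∧ ∀ y ∈ M, B x y = 0)) :
    (M ⊔ K ≤ L) ∧
    (∀ x ∈ L, ∃ a ∈ dualLat B M, ∃ b ∈ dualLat B K, x = a + b) ∧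
    ∃ γ : (↥(dualLat B M) ⧸ Submodule.comap (dualLat B M).subtype M) ≃+
          (↥(dualLat B K) ⧸ Submodule.comap (dualLat B K).subtype K),
      (∀ (x : ↥(dualLat B M)) (y : ↥(dualLat B K)),
          γ (Submodule.Quotient.mk x) = Submodule.Quotient.mk y →
          ∃ k : ℤ, B (y : V) (y : V) + B (x : V) (x : V) = 2 * (k : ℚ)) ∧
      (∀ (x : ↥(dualLat B M)) (y : ↥(dualLat B K)),
          ((x : V) + (y : V) ∈ L ↔
            γ (Submodule.Quotient.mk x) = Submodule.Quotient.mk y)) := by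
  have hKL : K ≤ L := fun x hx => ((hK x).1 hx).1
  have hKM : ∀ x ∈ K, ∀ y ∈ M, B x y = 0 := fun x hx => ((hK x).1 hx).2
  have hMK : ∀ x ∈ M, ∀ y ∈ K, B x y = 0 := fun x hx y hy => hsymm x y ▸ hKM y hy x hx
  have hKprim := mem_of_zsmul_mem_of_orthogonal hK
  obtain ⟨p, hp⟩ := exists_isOrthogonalProjection hsymm hMnd
  have hq := hp.id_sub hMK fun _ hx => mem_span_of_forall_apply_eq_zero hspan hK hx
  have hKnd := hp.nondegenerate_of_id_sub hnd hsymm hq hMK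
  have hpM : ∀ l ∈ L, p l ∈ dualLat B M := fun _ => hp.apply_mem_dualLat hint hML
  have hpK : ∀ l ∈ L, (LinearMap.id - p : V →ₗ[ℚ] V) l ∈ dualLat B K :=
    fun _ => hq.apply_mem_dualLat hint hKL
  have hψ := toDiscriminantGroup_surjective hnd hspan hfg hunimod hML hMprim hMnd hp hpM
  have hφ := toDiscriminantGroup_surjective hnd hspan hfg hunimod hKL hKprim hKnd hq hpK
  obtain ⟨γ, hγ⟩ := LinearMap.exists_linearEquiv_comp_eq_of_ker_eq hψ hφ <| by
    ext l
    simpa [toDiscriminantGroup_eq_zero_iff] using hp.apply_mem_iff_sub_mem hML hMprim hK l.2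
  have hglue := add_mem_iff_of_comp_eq hp hMnd hKM hML hKL hpM hpK γ hγ hψ
  refine ⟨sup_le hML hKL, fun x hx => ⟨p x, hpM x hx, _, hpK x hx, by simp⟩, γ.toAddEquiv,
    fun x y h => ?_, hglue⟩
  obtain ⟨n, hn⟩ := heven _ ((hglue x y).2 h)
  have hxy : B x y = 0 := apply_eq_zero_of_mem_span_of_mem_span hMK x.2.1 y.2.1
  have hyx : B y x = 0 := hsymm x y ▸ hxy
  refine ⟨n, ?_⟩
  simp only [map_add, LinearMap.add_apply, hxy, hyx] at hn
  linarith
end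

section
/- Let Γ be an even unimodular lattice, v ∈ Γ a primitive vector, and Λ ⊆ Γ a primitive sublattice orthogonal to v. Let K = Λ⊥ ∩ Γ, so v ∈ K. If Div_K(v) = 1 (i.e. v generates ℤ under the pairing with K), then the sublattice ℤv ⊕ Λ is primitively embedded in Γ. -/
/-!
Pairing with a vector `w ∈ K` (so `w ⊥ Λ`) such that `(v, w) = 1` reads off the
`v`-coordinate: if `n • x = a • v + λ` with `λ ∈ Λ`, then `a = n (x, w)`, so
`n • (x - (x, w) • v) = λ ∈ Λ` and primitivity of `Λ` puts `x - (x, w) • v` in `Λ`.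
-/
def Submodule.IsSaturatedIn {M : Type*} [AddCommGroup M] (L Γ : Submodule ℤ M) : Prop :=
  ∀ x ∈ Γ, ∀ n : ℤ, n ≠ 0 → n • x ∈ L → x ∈ L

namespace Submodule

variable {M : Type*} [AddCommGroup M]

theorem IsSaturatedIn.span_singleton_sup {Γ Λ : Submodule ℤ M} (hΛ : Λ.IsSaturatedIn Γ)
    {v : M} (hv : v ∈ Γ) (f : M →+ ℚ) (hfv : f v = 1) (hfΛ : ∀ z ∈ Λ, f z = 0)
    (hfΓ : ∀ x ∈ Γ, ∃ m : ℤ, f x = m) :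
    (span ℤ {v} ⊔ Λ).IsSaturatedIn Γ := by
  intro x hx n hn hnx
  obtain ⟨y, hy, z, hz, hyz⟩ := mem_sup.mp hnx
  obtain ⟨a, rfl⟩ := mem_span_singleton.mp hy
  obtain ⟨m, hm⟩ := hfΓ x hx
  have ha : a = n * m := by
    have h := congrArg f hyz
    rw [map_add, map_zsmul, map_zsmul, hfv, hfΛ z hz, hm] at h
    exact_mod_cast (by simpa using h : (a : ℚ) = n * m)
  have hz_eq : z = n • (x - m • v) := by
    rw [smul_sub, ← mul_smul, ← ha, ← hyz, add_sub_cancel_left]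
  have hxΛ : x - m • v ∈ Λ := hΛ _ (sub_mem hx (smul_mem _ m hv)) n hn (hz_eq ▸ hz)
  rw [← add_sub_cancel (m • v) x]
  exact add_mem (mem_sup_left (mem_span_singleton.mpr ⟨m, rfl⟩)) (mem_sup_right hxΛ)

end Submodule

theorem divisor_one_implies_primitive_embedding_general
    {V : Type*} [AddCommGroup V] [Module ℚ V]
    (B : V →ₗ[ℚ] V →ₗ[ℚ] ℚ)
    (hsymm : ∀ x y : V, B x y = B y x)
    (Γ : Submodule ℤ V)
    (hint : ∀ x ∈ Γ, ∀ y ∈ Γ, ∃ n : ℤ, B x y = (n : ℚ))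
    (Λ : Submodule ℤ V)
    (hΛprim : ∀ x ∈ Γ, ∀ n : ℤ, n ≠ 0 → n • x ∈ Λ → x ∈ Λ)
    (v : V) (hv : IsPrimitiveIn Γ v)
    (K : Submodule ℤ V)
    (hK : ∀ x : V, x ∈ K ↔ (x ∈ Γ ∧ ∀ y ∈ Λ, B x y = 0))
    -- `Div_K(v) = 1`, i.e. `v` pairs to `1` with some element of `K`:
    (hdiv : ∃ x ∈ K, B v x = 1) :
    ∀ x ∈ Γ, ∀ n : ℤ, n ≠ 0 →
      n • x ∈ (Submodule.span ℤ ({v} : Set V) ⊔ Λ) →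
      x ∈ (Submodule.span ℤ ({v} : Set V) ⊔ Λ) := by
  obtain ⟨w, hwK, hvw⟩ := hdiv
  obtain ⟨hwΓ, hwΛ⟩ := (hK w).mp hwK
  exact Submodule.IsSaturatedIn.span_singleton_sup (Γ := Γ) (Λ := Λ) hΛprim hv.1
    (B w).toAddMonoidHom (by simpa [hsymm w v] using hvw) hwΛ (hint w hwΓ)

/-- If `v` is a primitive vector of an even unimodular lattice `Γ`, `Λ ⊆ Γ` a
primitive sublattice orthogonal to `v`, `K = Λ⊥ ∩ Γ`, and `Div_K(v) = 1`, then
`ℤv ⊕ Λ` is primitively embedded in `Γ`. -/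
theorem divisor_one_implies_primitive_embedding
    {V : Type*} [AddCommGroup V] [Module ℚ V] [FiniteDimensional ℚ V]
    (B : V →ₗ[ℚ] V →ₗ[ℚ] ℚ)
    (hsymm : ∀ x y : V, B x y = B y x)
    (hnd : ∀ x : V, (∀ y : V, B x y = 0) → x = 0)
    (Γ : Submodule ℤ V)
    (hspan : Submodule.span ℚ (Γ : Set V) = ⊤)
    (hfg : Γ.FG)
    (hint : ∀ x ∈ Γ, ∀ y ∈ Γ, ∃ n : ℤ, B x y = (n : ℚ))
    (heven : ∀ x ∈ Γ, ∃ n : ℤ, B x x = 2 * (n : ℚ))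
    (hunimod : dualLat B Γ = Γ)
    (Λ : Submodule ℤ V) (hΛΓ : Λ ≤ Γ)
    (hΛprim : ∀ x ∈ Γ, ∀ n : ℤ, n ≠ 0 → n • x ∈ Λ → x ∈ Λ)
    (v : V) (hv : IsPrimitiveIn Γ v)
    (hvΛ : ∀ y ∈ Λ, B v y = 0)
    (K : Submodule ℤ V)
    (hK : ∀ x : V, x ∈ K ↔ (x ∈ Γ ∧ ∀ y ∈ Λ, B x y = 0))
    -- `Div_K(v) = 1`, i.e. `v` pairs to `1` with some element of `K`:
    (hdiv : ∃ x ∈ K, B v x = 1) :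
    ∀ x ∈ Γ, ∀ n : ℤ, n ≠ 0 →
      n • x ∈ (Submodule.span ℤ ({v} : Set V) ⊔ Λ) →
      x ∈ (Submodule.span ℤ ({v} : Set V) ⊔ Λ) :=
  divisor_one_implies_primitive_embedding_general B hsymm Γ hint Λ hΛprim v hv K hK hdiv
end

section
/- Let Γ be an even unimodular lattice, Λ ⊆ Γ a primitive nondegenerate sublattice with orthogonal complement K = Λ⊥ ∩ Γ, and let v ∈ K be a primitive vector of K with Div_K(v) > 1. Then the sublattice ℤv ⊕ Λ is not primitively embedded in Γ: there exists λ ∈ Λ such that (v + λ)/Div_K(v) ∈ Γ but (v + λ)/Div_K(v) ∉ ℤv ⊕ Λ. -/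
/-!
`K = Λ⊥ ∩ Γ` is saturated in `Γ`, hence a direct summand, so the integral functional
`x ↦ B v x / d` on `K` extends to `Γ`; by unimodularity the extension is `B w ·` for some
`w ∈ Γ`. Then `λ = d w - v` lies in `Γ` and is orthogonal to `K`; over `ℚ` the orthogonal
complement of `K` is the span of `Λ`, so primitivity of `Λ` puts `λ` in `Λ`, and
`(v + λ) / d = w`. Finally, for `x₀ ∈ K` with `B v x₀ = d` we get `B w x₀ = 1`, while every
`a v + l` with `l ∈ Λ` pairs with `x₀` to `a d`; hence `w ∉ ℤv ⊕ Λ`.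
-/

open LinearMap (BilinForm)

theorem Submodule.exists_retraction_of_saturated {M : Type*} [AddCommGroup M] [Module.Finite ℤ M]
    (N : Submodule ℤ M) (hN : ∀ (n : ℤ) (x : M), n ≠ 0 → n • x ∈ N → x ∈ N) :
    ∃ π : M →ₗ[ℤ] N, ∀ x : N, π x = x := by
  have : Module.IsTorsionFree ℤ (M ⧸ N) := .of_smul_eq_zero fun n q hnq => by
    obtain ⟨x, rfl⟩ := N.mkQ_surjective q
    rw [← map_smul, mkQ_apply, Submodule.Quotient.mk_eq_zero] at hnq
    rw [mkQ_apply, Submodule.Quotient.mk_eq_zero]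
    exact or_iff_not_imp_left.2 fun hn => hN n x hn hnq
  obtain ⟨s, hs⟩ := N.mkQ.exists_rightInverse_of_surjective N.range_mkQ
  refine ⟨(LinearMap.id - s ∘ₗ N.mkQ).codRestrict N fun x => ?_, fun x => ?_⟩
  · ext
    simp [(Submodule.Quotient.mk_eq_zero N).2 x.2]
  · have hs' : ∀ q, N.mkQ (s q) = q := LinearMap.congr_fun hs
    rw [← Submodule.Quotient.mk_eq_zero, ← mkQ_apply]
    simp only [LinearMap.sub_apply, map_sub, LinearMap.comp_apply, hs', LinearMap.id_apply,
      sub_self]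

section

variable {V : Type*} [AddCommGroup V] [Module ℚ V]

theorem Submodule.exists_zsmul_mem_of_mem_span {M : Submodule ℤ V} {x : V}
    (hx : x ∈ Submodule.span ℚ (M : Set V)) : ∃ N : ℤ, N ≠ 0 ∧ N • x ∈ M := by
  induction hx using Submodule.span_induction with
  | mem y hy => exact ⟨1, one_ne_zero, by simpa using hy⟩
  | zero => exact ⟨1, one_ne_zero, by simp⟩
  | add x y _ _ hx hy =>
    obtain ⟨N, hN, hNx⟩ := hx
    obtain ⟨N', hN', hNy⟩ := hy
    refine ⟨N * N', mul_ne_zero hN hN', ?_⟩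
    rw [smul_add, mul_comm, mul_smul, mul_comm, mul_smul]
    exact M.add_mem (M.smul_mem N' hNx) (M.smul_mem N hNy)
  | smul q x _ hx =>
    obtain ⟨N, hN, hNx⟩ := hx
    refine ⟨q.den * N, mul_ne_zero (by exact_mod_cast q.den_ne_zero) hN, ?_⟩
    have hq : ((q.den * N : ℤ) : ℚ) * q = q.num * N := by
      push_cast; rw [mul_right_comm, Rat.den_mul_eq_num]
    rw [← Int.cast_smul_eq_zsmul ℚ, smul_smul, hq, mul_smul, Int.cast_smul_eq_zsmul,
      Int.cast_smul_eq_zsmul]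
    exact M.smul_mem _ hNx

theorem Submodule.IsLattice.exists_extend {P : Type*} [AddCommGroup P] [Module ℚ P]
    (Γ : Submodule ℤ V) [Γ.IsLattice ℚ] (φ : Γ →ₗ[ℤ] P) :
    ∃ ψ : V →ₗ[ℚ] P, ∀ y : Γ, ψ y = φ y := by
  let b := Module.Free.chooseBasis ℤ Γ
  let e := b.extendOfIsLattice ℚ
  have hext : (e.constr ℚ (φ ∘ b)).restrictScalars ℤ ∘ₗ Γ.subtype = φ :=
    b.ext fun i => by simpa [e] using e.constr_basis ℚ (φ ∘ b) i
  exact ⟨e.constr ℚ (φ ∘ b), LinearMap.congr_fun hext⟩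

theorem exists_mem_forall_apply_eq_of_dualLat_eq [FiniteDimensional ℚ V] {B : BilinForm ℚ V}
    (hB : B.Nondegenerate) {Γ : Submodule ℤ V} [Γ.IsLattice ℚ] (hunimod : dualLat B Γ = Γ)
    (φ : Γ →ₗ[ℤ] ℚ) (hφ : ∀ y, ∃ n : ℤ, φ y = n) : ∃ w ∈ Γ, ∀ y : Γ, B w y = φ y := by
  obtain ⟨ψ, hψ⟩ := Submodule.IsLattice.exists_extend Γ φ
  have hw : ∀ y : Γ, B ((B.toDual hB).symm ψ) y = φ y := by simp [hψ]
  refine ⟨(B.toDual hB).symm ψ, hunimod ▸ ⟨?_, fun y hy => ?_⟩, hw⟩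
  · simp [Submodule.IsLattice.span_eq_top]
  · obtain ⟨n, hn⟩ := hφ ⟨y, hy⟩
    exact ⟨n, (hw ⟨y, hy⟩).trans hn⟩

section Orthogonal

variable {B : BilinForm ℚ V} {Γ Λ K : Submodule ℤ V}

theorem mem_of_zsmul_mem_of_orthogonal_s6 (hK : ∀ x, x ∈ K ↔ x ∈ Γ ∧ ∀ y ∈ Λ, B x y = 0)
    {n : ℤ} {x : V} (hn : n ≠ 0) (hx : x ∈ Γ) (hnx : n • x ∈ K) : x ∈ K := by
  refine (hK x).2 ⟨hx, fun l hl => ?_⟩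
  have h := ((hK _).1 hnx).2 l hl
  rw [← Int.cast_smul_eq_zsmul ℚ, map_smul, LinearMap.smul_apply, smul_eq_mul] at h
  exact (mul_eq_zero.1 h).resolve_left (by exact_mod_cast hn)

theorem orthogonal_span_le_span (hB : B.IsSymm)
    (hK : ∀ x, x ∈ K ↔ x ∈ Γ ∧ ∀ y ∈ Λ, B x y = 0)
    (hspan : Submodule.span ℚ (Γ : Set V) = ⊤) :
    B.orthogonal (Submodule.span ℚ (Λ : Set V)) ≤ Submodule.span ℚ (K : Set V) := by
  intro z hz
  obtain ⟨N, hN, hNz⟩ :=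
    Submodule.exists_zsmul_mem_of_mem_span (hspan ▸ Submodule.mem_top : z ∈ _)
  have hNzK : N • z ∈ K := (hK _).2 ⟨hNz, fun l hl => by
    rw [hB.eq, ← Int.cast_smul_eq_zsmul ℚ, map_smul, hz l (Submodule.subset_span hl), smul_zero]⟩
  have hz : z = (N : ℚ)⁻¹ • N • z := by
    rw [← Int.cast_smul_eq_zsmul ℚ, smul_smul, inv_mul_cancel₀ (by exact_mod_cast hN), one_smul]
  rw [hz]
  exact Submodule.smul_mem _ _ (Submodule.subset_span hNzK)

theorem mem_span_of_forall_apply_eq_zero_s6 [FiniteDimensional ℚ V] (hBnd : B.Nondegenerate)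
    (hB : B.IsSymm)
    (hK : ∀ x, x ∈ K ↔ x ∈ Γ ∧ ∀ y ∈ Λ, B x y = 0)
    (hspan : Submodule.span ℚ (Γ : Set V) = ⊤) {y : V} (hy : ∀ x ∈ K, B y x = 0) :
    y ∈ Submodule.span ℚ (Λ : Set V) := by
  rw [← B.orthogonal_orthogonal hBnd hB.isRefl (Submodule.span ℚ (Λ : Set V))]
  intro u hu
  have hKy : Submodule.span ℚ (K : Set V) ≤ LinearMap.ker (B.flip y) :=
    Submodule.span_le.2 fun x hx => by simp [hB.eq x y, hy x hx]
  simpa using hKy (orthogonal_span_le_span hB hK hspan hu)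

theorem mem_of_forall_apply_eq_zero [FiniteDimensional ℚ V] (hBnd : B.Nondegenerate)
    (hB : B.IsSymm)
    (hK : ∀ x, x ∈ K ↔ x ∈ Γ ∧ ∀ y ∈ Λ, B x y = 0)
    (hspan : Submodule.span ℚ (Γ : Set V) = ⊤)
    (hΛprim : ∀ x ∈ Γ, ∀ n : ℤ, n ≠ 0 → n • x ∈ Λ → x ∈ Λ)
    {y : V} (hyΓ : y ∈ Γ) (hy : ∀ x ∈ K, B y x = 0) : y ∈ Λ := by
  obtain ⟨N, hN, hNy⟩ :=
    Submodule.exists_zsmul_mem_of_mem_span (mem_span_of_forall_apply_eq_zero_s6 hBnd hB hK hspan hy)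
  exact hΛprim y hyΓ N hN hNy

end Orthogonal

theorem notMem_span_singleton_sup_of_apply_eq_one {B : BilinForm ℚ V} {Λ : Submodule ℤ V}
    {v w x₀ : V} {d : ℤ} (hd : 1 < d)
    (hΛ : ∀ l ∈ Λ, B l x₀ = 0) (hv : B v x₀ = d) (hw : B w x₀ = 1) :
    w ∉ Submodule.span ℤ {v} ⊔ Λ := by
  intro hmem
  obtain ⟨s, hs, l, hl, rfl⟩ := Submodule.mem_sup.1 hmem
  obtain ⟨a, rfl⟩ := Submodule.mem_span_singleton.1 hs
  rw [map_add, LinearMap.add_apply, hΛ l hl, add_zero, ← Int.cast_smul_eq_zsmul ℚ, map_smul,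
    LinearMap.smul_apply, hv, smul_eq_mul] at hw
  have had : a * d = 1 := by exact_mod_cast hw
  have := Int.le_of_dvd one_pos ⟨a, by rw [← had, mul_comm]⟩
  omega

end

theorem divisor_gt_one_implies_not_primitive_general
    {V : Type*} [AddCommGroup V] [Module ℚ V] [FiniteDimensional ℚ V]
    (B : V →ₗ[ℚ] V →ₗ[ℚ] ℚ)
    (hsymm : ∀ x y : V, B x y = B y x)
    (hnd : ∀ x : V, (∀ y : V, B x y = 0) → x = 0)
    (Γ : Submodule ℤ V)
    (hspan : Submodule.span ℚ (Γ : Set V) = ⊤)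
    (hfg : Γ.FG)
    (hunimod : dualLat B Γ = Γ)
    (Λ : Submodule ℤ V)
    (hΛprim : ∀ x ∈ Γ, ∀ n : ℤ, n ≠ 0 → n • x ∈ Λ → x ∈ Λ)
    (K : Submodule ℤ V)
    (hK : ∀ x : V, x ∈ K ↔ (x ∈ Γ ∧ ∀ y ∈ Λ, B x y = 0))
    (v : V) (hv : IsPrimitiveIn K v)
    -- `Div_K(v) = d > 1`:
    (d : ℤ) (hd : 1 < d)
    (hgen : ∃ x ∈ K, B v x = (d : ℚ))
    (hdvd : ∀ x ∈ K, ∃ k : ℤ, B v x = (k : ℚ) * (d : ℚ)) :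
    ∃ lam ∈ Λ, ((d : ℚ)⁻¹ • (v + lam) ∈ Γ ∧
      (d : ℚ)⁻¹ • (v + lam) ∉ (Submodule.span ℤ ({v} : Set V) ⊔ Λ)) := by
  have hB : LinearMap.BilinForm.IsSymm B := ⟨hsymm⟩
  have hBnd : LinearMap.BilinForm.Nondegenerate B :=
    ⟨hnd, fun y hy => hnd y fun x => hsymm y x ▸ hy x⟩
  have : Γ.IsLattice ℚ := ⟨hfg, hspan⟩
  have hd0 : (d : ℚ) ≠ 0 := by exact_mod_cast (one_pos.trans hd).ne'
  have hKΓ : K ≤ Γ := fun x hx => ((hK x).1 hx).1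
  obtain ⟨π, hπ⟩ := (K.comap Γ.subtype).exists_retraction_of_saturated
    fun n y hn hny => mem_of_zsmul_mem_of_orthogonal_s6 hK hn y.2 hny
  let φ : Γ →ₗ[ℤ] ℚ := (d : ℚ)⁻¹ •
    ((B v).restrictScalars ℤ ∘ₗ Γ.subtype ∘ₗ (K.comap Γ.subtype).subtype ∘ₗ π)
  have hφ_apply : ∀ y, φ y = (d : ℚ)⁻¹ * B v (π y) := fun _ => rfl
  have hφ : ∀ y, ∃ n : ℤ, φ y = n := fun y => by
    obtain ⟨k, hk⟩ := hdvd ((π y : Γ) : V) (π y).2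
    exact ⟨k, by rw [hφ_apply, hk, mul_comm, mul_inv_cancel_right₀ hd0]⟩
  obtain ⟨w, hwΓ, hw⟩ := exists_mem_forall_apply_eq_of_dualLat_eq hBnd hunimod φ hφ
  have hwK : ∀ x ∈ K, B w x = (d : ℚ)⁻¹ * B v x := fun x hx => by
    rw [hw ⟨x, hKΓ hx⟩, hφ_apply, hπ ⟨⟨x, hKΓ hx⟩, hx⟩]
  have hw_eq : (d : ℚ)⁻¹ • (v + (d • w - v)) = w := by
    rw [add_sub_cancel, ← Int.cast_smul_eq_zsmul ℚ, smul_smul, inv_mul_cancel₀ hd0, one_smul]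
  refine ⟨d • w - v, mem_of_forall_apply_eq_zero hBnd hB hK hspan hΛprim ?_ ?_, ?_⟩
  · exact sub_mem (Γ.smul_mem d hwΓ) (hKΓ hv.1)
  · intro x hx
    rw [← Int.cast_smul_eq_zsmul ℚ, map_sub, map_smul, LinearMap.sub_apply, LinearMap.smul_apply,
      hwK x hx, smul_eq_mul, mul_inv_cancel_left₀ hd0, sub_self]
  · obtain ⟨x₀, hx₀K, hx₀⟩ := hgen
    rw [hw_eq]
    refine ⟨hwΓ, notMem_span_singleton_sup_of_apply_eq_one hd
      (fun l hl => hsymm l x₀ ▸ ((hK x₀).1 hx₀K).2 l hl) hx₀ ?_⟩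
    rw [hwK x₀ hx₀K, hx₀, inv_mul_cancel₀ hd0]

/-- If `v ∈ K = Λ⊥ ∩ Γ` is a primitive vector with `Div_K(v) = d > 1`, then
`ℤv ⊕ Λ` is not primitively embedded in `Γ`: there exists `λ ∈ Λ` with
`(v + λ)/d ∈ Γ` but `(v + λ)/d ∉ ℤv ⊕ Λ`. -/
theorem divisor_gt_one_implies_not_primitive
    {V : Type*} [AddCommGroup V] [Module ℚ V] [FiniteDimensional ℚ V]
    (B : V →ₗ[ℚ] V →ₗ[ℚ] ℚ)
    (hsymm : ∀ x y : V, B x y = B y x)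
    (hnd : ∀ x : V, (∀ y : V, B x y = 0) → x = 0)
    (Γ : Submodule ℤ V)
    (hspan : Submodule.span ℚ (Γ : Set V) = ⊤)
    (hfg : Γ.FG)
    (hint : ∀ x ∈ Γ, ∀ y ∈ Γ, ∃ n : ℤ, B x y = (n : ℚ))
    (heven : ∀ x ∈ Γ, ∃ n : ℤ, B x x = 2 * (n : ℚ))
    (hunimod : dualLat B Γ = Γ)
    (Λ : Submodule ℤ V) (hΛΓ : Λ ≤ Γ)
    (hΛprim : ∀ x ∈ Γ, ∀ n : ℤ, n ≠ 0 → n • x ∈ Λ → x ∈ Λ)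
    (hΛnd : ∀ x ∈ Submodule.span ℚ (Λ : Set V), (∀ y ∈ Λ, B x y = 0) → x = 0)
    (K : Submodule ℤ V)
    (hK : ∀ x : V, x ∈ K ↔ (x ∈ Γ ∧ ∀ y ∈ Λ, B x y = 0))
    (v : V) (hv : IsPrimitiveIn K v)
    -- `Div_K(v) = d > 1`:
    (d : ℤ) (hd : 1 < d)
    (hgen : ∃ x ∈ K, B v x = (d : ℚ))
    (hdvd : ∀ x ∈ K, ∃ k : ℤ, B v x = (k : ℚ) * (d : ℚ)) :
    ∃ lam ∈ Λ, ((d : ℚ)⁻¹ • (v + lam) ∈ Γ ∧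
      (d : ℚ)⁻¹ • (v + lam) ∉ (Submodule.span ℤ ({v} : Set V) ⊔ Λ)) :=
  divisor_gt_one_implies_not_primitive_general B hsymm hnd Γ hspan hfg hunimod Λ hΛprim K hK v hv d
    hd hgen hdvd
end

section
/- Conversely to the above: let Γ be an even lattice, v ∈ Γ primitive with v² = 2n-2 > 0, and v' ∈ Γ with 0 ≤ (v')²·v² < (v,v')² ≤ (v²/2)² and (v,v') ≥ 0. Write v' = α·v + β·x where x generates v⊥ ∩ M for M the rank-2 primitive sublattice containing v and v', α = (v,v')/v², β = (x,v')/x². Then 0 ≤ α ≤ 1/2, and setting v'' = v - v', one has (v')² ≥ 0, (v'')² ≥ (v')² ≥ 0, and for any positive-definite subspace Z with v ∈ Z and Z ⊥ x: v'_+ = α·v, v''_+ = (1-α)·v, so |v_+| = |v'_+| + |v''_+|. -/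
/-!
The projection onto the positive definite subspace `Z` fixes `v ∈ Z` and kills `x ⊥ Z`, so it
sends `v' = α • v + β • x` to `α • v` and `v - v'` to `(1 - α) • v`; with `0 ≤ α ≤ 1/2` the
lengths of these projections are `α |v|` and `(1 - α) |v|`, which add up to `|v|`.
-/

section Projection

variable {V : Type*} [AddCommGroup V] [Module ℝ V] {B : V →ₗ[ℝ] V →ₗ[ℝ] ℝ} {Z : Submodule ℝ V}
  {P : V →ₗ[ℝ] V}

theorem eq_zero_of_mem_of_apply_self_eq_zero (hZpos : ∀ z ∈ Z, z ≠ 0 → 0 < B z z) {z : V}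
    (hz : z ∈ Z) (hzz : B z z = 0) : z = 0 := by
  by_contra hne
  exact (hZpos z hz hne).ne' hzz

theorem proj_apply_of_mem (hZpos : ∀ z ∈ Z, z ≠ 0 → 0 < B z z) (hPmem : ∀ y : V, P y ∈ Z)
    (hPorth : ∀ y : V, ∀ z ∈ Z, B (y - P y) z = 0) {v : V} (hv : v ∈ Z) : P v = v := by
  have hmem : v - P v ∈ Z := Z.sub_mem hv (hPmem v)
  exact (sub_eq_zero.1 (eq_zero_of_mem_of_apply_self_eq_zero hZpos hmem (hPorth v _ hmem))).symm

theorem proj_apply_eq_zero (hZpos : ∀ z ∈ Z, z ≠ 0 → 0 < B z z) (hPmem : ∀ y : V, P y ∈ Z)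
    (hPorth : ∀ y : V, ∀ z ∈ Z, B (y - P y) z = 0) {x : V} (hx : ∀ z ∈ Z, B x z = 0) :
    P x = 0 := by
  have hPx := hPorth x (P x) (hPmem x)
  rw [map_sub, LinearMap.sub_apply, hx _ (hPmem x), zero_sub, neg_eq_zero] at hPx
  exact eq_zero_of_mem_of_apply_self_eq_zero hZpos (hPmem x) hPx

end Projection

section BilinearForm

variable {V : Type*} [AddCommGroup V] [Module ℝ V] (B : V →ₗ[ℝ] V →ₗ[ℝ] ℝ)

theorem apply_sub_sub_of_symm (hsymm : ∀ x y : V, B x y = B y x) (v w : V) :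
    B (v - w) (v - w) = B v v - 2 * B v w + B w w := by
  simp only [map_sub, LinearMap.sub_apply, hsymm w v]
  ring

theorem sqrt_apply_smul_smul {c : ℝ} (hc : 0 ≤ c) (v : V) :
    √(B (c • v) (c • v)) = c * √(B v v) := by
  rw [LinearMap.map_smul₂, map_smul, smul_eq_mul, smul_eq_mul, ← mul_assoc,
    Real.sqrt_mul (mul_self_nonneg c), Real.sqrt_mul_self hc]

end BilinearForm

theorem decay_inequalities_converse_general
    {V : Type*} [AddCommGroup V] [Module ℝ V]
    (B : V →ₗ[ℝ] V →ₗ[ℝ] ℝ)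
    (hsymm : ∀ x y : V, B x y = B y x)
    (v v' x : V)
    (hpos : 0 < B v v)
    (h1 : 0 ≤ B v' v' * B v v)
    (h3 : (B v v') ^ 2 ≤ (B v v / 2) ^ 2)
    (h4 : 0 ≤ B v v')
    (hdec : v' = (B v v' / B v v) • v + (B x v' / B x x) • x)
    (Z : Submodule ℝ V)
    (hZpos : ∀ z ∈ Z, z ≠ 0 → 0 < B z z)
    (hvZ : v ∈ Z) (hZx : ∀ z ∈ Z, B z x = 0)
    -- `P` is the orthogonal projection onto `Z`:
    (P : V →ₗ[ℝ] V)
    (hPmem : ∀ y : V, P y ∈ Z)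
    (hPorth : ∀ y : V, ∀ z ∈ Z, B (y - P y) z = 0) :
    0 ≤ B v v' / B v v ∧
    B v v' / B v v ≤ 1 / 2 ∧
    0 ≤ B v' v' ∧
    B v' v' ≤ B (v - v') (v - v') ∧
    P v' = (B v v' / B v v) • v ∧
    P (v - v') = (1 - B v v' / B v v) • v ∧
    Real.sqrt (B (P v) (P v)) =
      Real.sqrt (B (P v') (P v')) +
      Real.sqrt (B (P (v - v')) (P (v - v'))) := by
  set α := B v v' / B v v
  have hle : B v v' ≤ B v v / 2 := (pow_le_pow_iff_left₀ h4 (by positivity) two_ne_zero).1 h3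
  have hα0 : 0 ≤ α := div_nonneg h4 hpos.le
  have hα : α ≤ 1 / 2 := by rw [div_le_iff₀ hpos]; linarith
  have hPv : P v = v := proj_apply_of_mem hZpos hPmem hPorth hvZ
  have hPx : P x = 0 := proj_apply_eq_zero hZpos hPmem hPorth fun z hz => hsymm x z ▸ hZx z hz
  have hPv' : P v' = α • v := by
    rw [hdec, map_add, map_smul, map_smul, hPv, hPx, smul_zero, add_zero]
  have hPv'' : P (v - v') = (1 - α) • v := by rw [map_sub, hPv, hPv', sub_smul, one_smul]
  refine ⟨hα0, hα, nonneg_of_mul_nonneg_left h1 hpos, ?_, hPv', hPv'', ?_⟩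
  · rw [apply_sub_sub_of_symm B hsymm]
    linarith
  · rw [hPv, hPv', hPv'', sqrt_apply_smul_smul B hα0, sqrt_apply_smul_smul B (by linarith)]
    ring

/-- Converse: if `0 ≤ (v')²v² < (v,v')² ≤ (v²/2)²` and `(v,v') ≥ 0`, with
`v' = α·v + β·x` for `x` a generator of `v⊥` in the plane of `v, v'`
(`α = (v,v')/v²`, `β = (x,v')/x²`), then `0 ≤ α ≤ 1/2`, `(v')² ≥ 0`,
`(v'')² ≥ (v')²` for `v'' = v - v'`, and for any positive definite subspace
`Z ∋ v` with `Z ⊥ x`: `v'₊ = α·v`, `v''₊ = (1-α)·v`, so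
`|v₊| = |v'₊| + |v''₊|`. -/
theorem decay_inequalities_converse
    {V : Type*} [AddCommGroup V] [Module ℝ V]
    (B : V →ₗ[ℝ] V →ₗ[ℝ] ℝ)
    (hsymm : ∀ x y : V, B x y = B y x)
    (v v' x : V)
    (n : ℤ) (hvv : B v v = 2 * (n : ℝ) - 2) (hpos : 0 < B v v)
    (h1 : 0 ≤ B v' v' * B v v)
    (h2 : B v' v' * B v v < (B v v') ^ 2)
    (h3 : (B v v') ^ 2 ≤ (B v v / 2) ^ 2)
    (h4 : 0 ≤ B v v')
    (hxv : B v x = 0) (hxx : B x x < 0)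
    (hdec : v' = (B v v' / B v v) • v + (B x v' / B x x) • x)
    (Z : Submodule ℝ V)
    (hZpos : ∀ z ∈ Z, z ≠ 0 → 0 < B z z)
    (hvZ : v ∈ Z) (hZx : ∀ z ∈ Z, B z x = 0)
    -- `P` is the orthogonal projection onto `Z`:
    (P : V →ₗ[ℝ] V)
    (hPmem : ∀ y : V, P y ∈ Z)
    (hPorth : ∀ y : V, ∀ z ∈ Z, B (y - P y) z = 0) :
    0 ≤ B v v' / B v v ∧
    B v v' / B v v ≤ 1 / 2 ∧
    0 ≤ B v' v' ∧
    B v' v' ≤ B (v - v') (v - v') ∧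
    P v' = (B v v' / B v v) • v ∧
    P (v - v') = (1 - B v v' / B v v) • v ∧
    Real.sqrt (B (P v) (P v)) =
      Real.sqrt (B (P v') (P v')) +
      Real.sqrt (B (P (v - v')) (P (v - v'))) :=
  decay_inequalities_converse_general B hsymm v v' x hpos h1 h3 h4 hdec Z hZpos hvZ hZx P hPmem
    hPorth
end

section
/- Let G be a finite group acting faithfully by isometries on an even unimodular lattice Γ, with invariant lattice Γ^G = {x : g(x)=x ∀g} and coinvariant lattice Γ_G = (Γ^G)⊥ ∩ Γ. Then the induced action of G on the discriminant group (Γ_G)*/Γ_G is trivial. -/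
/-!
For `z ∈ Γ` the vector `g⁻¹ z - z` is coinvariant, and `g` being an isometry gives
`(g x - x, z) = (x, g⁻¹ z - z)`. So if `x` pairs integrally with `Γ_G`, then `g x - x` pairs
integrally with all of `Γ`, i.e. lies in `Γ* = Γ`; the same identity shows that `g x - x` is
orthogonal to every invariant vector, hence lies in `Γ_G`.
-/

theorem LinearEquiv.apply_sub_self_left_of_isometry {R M : Type*} [CommRing R]
    [AddCommGroup M] [Module R M] (B : M →ₗ[R] M →ₗ[R] R) {g : M ≃ₗ[R] M}
    (hg : ∀ x y, B (g x) (g y) = B x y) (x z : M) :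
    B (g x - x) z = B x (g.symm z - z) := by
  have hgx : B (g x) z = B x (g.symm z) := by
    simpa only [apply_symm_apply] using hg x (g.symm z)
  rw [map_sub, LinearMap.sub_apply, map_sub, hgx]

section Coinvariant

variable {V : Type*} [AddCommGroup V] [Module ℚ V] (B : V →ₗ[ℚ] V →ₗ[ℚ] ℚ)

def coinvariantLattice (Γ : Submodule ℤ V) (G : Subgroup (V ≃ₗ[ℚ] V)) : Set V :=
  {x | x ∈ Γ ∧ ∀ y : V, (y ∈ Γ ∧ ∀ g ∈ G, g y = y) → B x y = 0}

variable {Γ : Submodule ℤ V} {G : Subgroup (V ≃ₗ[ℚ] V)}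

theorem apply_sub_self_left_eq_zero_of_forall_fixed
    (hGB : ∀ g ∈ G, ∀ x y : V, B (g x) (g y) = B x y) {g : V ≃ₗ[ℚ] V} (hg : g ∈ G) (x : V)
    {y : V} (hy : ∀ h ∈ G, h y = y) : B (g x - x) y = 0 := by
  rw [g.apply_sub_self_left_of_isometry B (hGB g hg), ← LinearEquiv.coe_inv,
    hy g⁻¹ (G.inv_mem hg), sub_self, map_zero]

theorem sub_mem_coinvariantLattice (hGB : ∀ g ∈ G, ∀ x y : V, B (g x) (g y) = B x y)
    (hGΓ : ∀ g ∈ G, ∀ x ∈ Γ, g x ∈ Γ) {g : V ≃ₗ[ℚ] V}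
    (hg : g ∈ G) {z : V} (hz : z ∈ Γ) : g z - z ∈ coinvariantLattice B Γ G :=
  ⟨Γ.sub_mem (hGΓ g hg z hz) hz, fun _ hy =>
    apply_sub_self_left_eq_zero_of_forall_fixed B hGB hg z hy.2⟩

end Coinvariant

theorem trivial_action_on_coinvariant_discriminant_general
    {V : Type*} [AddCommGroup V] [Module ℚ V]
    (B : V →ₗ[ℚ] V →ₗ[ℚ] ℚ)
    (Γ : Submodule ℤ V)
    (hspan : Submodule.span ℚ (Γ : Set V) = ⊤)
    (hunimod : dualLat B Γ = Γ)
    (G : Subgroup (V ≃ₗ[ℚ] V))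
    (hGΓ : ∀ g ∈ G, ∀ x ∈ Γ, g x ∈ Γ)
    (hGB : ∀ g ∈ G, ∀ x y : V, B (g x) (g y) = B x y)
    -- `C` is the coinvariant lattice `Γ_G = (Γ^G)⊥ ∩ Γ`:
    (C : Set V)
    (hC : C = {x : V | x ∈ Γ ∧ ∀ y : V, (y ∈ Γ ∧ ∀ g ∈ G, g y = y) → B x y = 0}) :
    ∀ g ∈ G, ∀ x : V,
      x ∈ Submodule.span ℚ C → (∀ y ∈ C, ∃ k : ℤ, B x y = (k : ℚ)) →
      g x - x ∈ C := by
  intro g hg x _ hxdual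
  change C = coinvariantLattice B Γ G at hC
  subst hC
  refine ⟨?_, fun y hy => apply_sub_self_left_eq_zero_of_forall_fixed B hGB hg x hy.2⟩
  rw [← hunimod]
  refine ⟨by simp [hspan], fun z hz => ?_⟩
  obtain ⟨k, hk⟩ := hxdual _ (sub_mem_coinvariantLattice B hGB hGΓ (G.inv_mem hg) hz)
  exact ⟨k, (g.apply_sub_self_left_of_isometry B (hGB g hg) x z).trans hk⟩

/-- For a finite group `G` of isometries of an even unimodular lattice `Γ`, the
induced action of `G` on the discriminant group `(Γ_G)*/Γ_G` of the coinvariant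
lattice `Γ_G = (Γ^G)⊥ ∩ Γ` is trivial: `g x - x ∈ Γ_G` for every `g ∈ G` and every
`x` in the dual lattice `(Γ_G)*`. -/
theorem trivial_action_on_coinvariant_discriminant
    {V : Type*} [AddCommGroup V] [Module ℚ V] [FiniteDimensional ℚ V]
    (B : V →ₗ[ℚ] V →ₗ[ℚ] ℚ)
    (hsymm : ∀ x y : V, B x y = B y x)
    (hnd : ∀ x : V, (∀ y : V, B x y = 0) → x = 0)
    (Γ : Submodule ℤ V)
    (hspan : Submodule.span ℚ (Γ : Set V) = ⊤)
    (hfg : Γ.FG)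
    (hint : ∀ x ∈ Γ, ∀ y ∈ Γ, ∃ n : ℤ, B x y = (n : ℚ))
    (heven : ∀ x ∈ Γ, ∃ n : ℤ, B x x = 2 * (n : ℚ))
    (hunimod : dualLat B Γ = Γ)
    (G : Subgroup (V ≃ₗ[ℚ] V))
    (hGfin : (G : Set (V ≃ₗ[ℚ] V)).Finite)
    (hGΓ : ∀ g ∈ G, ∀ x ∈ Γ, g x ∈ Γ)
    (hGB : ∀ g ∈ G, ∀ x y : V, B (g x) (g y) = B x y)
    -- `C` is the coinvariant lattice `Γ_G = (Γ^G)⊥ ∩ Γ`: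
    (C : Set V)
    (hC : C = {x : V | x ∈ Γ ∧ ∀ y : V, (y ∈ Γ ∧ ∀ g ∈ G, g y = y) → B x y = 0}) :
    ∀ g ∈ G, ∀ x : V,
      x ∈ Submodule.span ℚ C → (∀ y ∈ C, ∃ k : ℤ, B x y = (k : ℚ)) →
      g x - x ∈ C :=
  trivial_action_on_coinvariant_discriminant_general B Γ hspan hunimod G hGΓ hGB C hC
end
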